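/- Let (Ω, P) be a probability space and (w_k)_{k∈ℕ} an i.i.d. sequence of real random variables, each distributed according to the uniform probability measure on [−1, 1]. Fix x₀ ∈ ℝ with |x₀| > 4 and define the random trajectory X₀ = x₀, X_{k+1}(ω) = X_k(ω) + X_k(ω)² · w_k(ω). Then P(∀ k ∈ ℕ, |X_k| > 2^{k+2}) ≥ e^{−2}; in particular P(|X_k| → ∞ as k → ∞) ≥ e^{−2} > 0, so the system is not almost-surely reachable to any bounded target set from x₀. -/

import Mathlib

/-!
Since `X (k + 1) = X k * (1 + X k * w k)`, the state at least doubles whenever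
`|1 + X k * w k| ≥ 2`. If `|X k| ≥ 2 ^ k * |x₀| ≥ 2 ^ (k + 2)`, the disturbances violating this
form an interval of length `4 / |X k|`, so conditionally on the past the doubling happens with
probability at least `1 - 2 / |X k| ≥ 1 - 2⁻¹ ^ (k + 1) ≥ exp (-2 * 2⁻¹ ^ (k + 1))`. By
independence the state doubles at every step with probability at least
`∏ k, exp (-2 * 2⁻¹ ^ (k + 1)) = exp (-2)`. Starting beyond the radius of a bounded set, such a
trajectory never meets it.
-/

open MeasureTheory ProbabilityTheory Filter

noncomputable def uniformPM : Measure ℝ :=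
  (2 : ENNReal)⁻¹ • (volume.restrict (Set.Icc (-1 : ℝ) 1))

def trajOneDim {Ω : Type*} (w : ℕ → Ω → ℝ) (x₀ : ℝ) : ℕ → Ω → ℝ
  | 0 => fun _ => x₀
  | k + 1 => fun ω => trajOneDim w x₀ k ω + (trajOneDim w x₀ k ω) ^ 2 * w k ω

open Real
open scoped ENNReal

instance : IsProbabilityMeasure uniformPM := by
  constructor
  simp [uniformPM, Real.volume_Icc]
  rw [show (1 : ℝ) + 1 = 2 by norm_num, ENNReal.ofReal_ofNat]
  exact ENNReal.inv_mul_cancel (by norm_num) (by norm_num)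

theorem uniformPM_le_half_volume (s : Set ℝ) : uniformPM s ≤ 2⁻¹ * volume s := by
  simp only [uniformPM, Measure.smul_apply, smul_eq_mul]
  exact mul_le_mul_right (Measure.restrict_apply_le _ _) _

theorem ofReal_one_sub_le_uniformPM {x : ℝ} (hx : x ≠ 0) :
    ENNReal.ofReal (1 - 2 / |x|) ≤ uniformPM {t | 2 ≤ |1 + x * t|} := by
  have hball : {t : ℝ | 2 ≤ |1 + x * t|}ᶜ = Metric.ball (-x⁻¹) (2 / |x|) := by
    ext t
    rw [Set.mem_compl_iff, Set.mem_ofPred_eq, not_le, Metric.mem_ball, Real.dist_eq,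
      sub_neg_eq_add, lt_div_iff₀ (abs_pos.2 hx), ← abs_mul,
      show (t + x⁻¹) * x = 1 + x * t by field_simp; ring]
  have hmeas : MeasurableSet {t : ℝ | 2 ≤ |1 + x * t|} :=
    measurableSet_le measurable_const (by fun_prop)
  calc ENNReal.ofReal (1 - 2 / |x|) = 1 - 2⁻¹ * volume (Metric.ball (-x⁻¹) (2 / |x|)) := by
        rw [Real.volume_ball, ENNReal.ofReal_mul zero_le_two, ENNReal.ofReal_ofNat,
          ENNReal.inv_mul_cancel_left two_ne_zero ENNReal.ofNat_ne_top,
          ENNReal.ofReal_sub _ (by positivity), ENNReal.ofReal_one]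
    _ ≤ 1 - uniformPM {t | 2 ≤ |1 + x * t|}ᶜ := by
        rw [hball]; gcongr; exact uniformPM_le_half_volume _
    _ = _ := by
        rw [prob_compl_eq_one_sub hmeas, ENNReal.sub_sub_cancel ENNReal.one_ne_top prob_le_one]

theorem exp_neg_two_mul_le_one_sub {s : ℝ} (hs₀ : 0 ≤ s) (hs : s ≤ 1 / 2) :
    exp (-(2 * s)) ≤ 1 - s := by
  rw [exp_neg, inv_le_iff_one_le_mul₀ (exp_pos _)]
  nlinarith [add_one_le_exp (2 * s)]

theorem ProbabilityTheory.iIndepFun.indepFun_of_measurable_iSup {Ω ι β γ : Type*}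
    [MeasurableSpace Ω] {P : Measure Ω} [MeasurableSpace β] [MeasurableSpace γ]
    {f : ι → Ω → β} (hf : ∀ i, Measurable (f i)) (hind : iIndepFun f P) {S : Set ι} {i : ι}
    (hi : i ∉ S) {Y : Ω → γ} (hY : Measurable[⨆ j ∈ S, MeasurableSpace.comap (f j) ‹_›] Y) :
    IndepFun Y (f i) P := by
  have h := indep_iSup_of_disjoint (fun j => (hf j).comap_le) hind.iIndep
    (Set.disjoint_singleton_right.2 hi)
  rw [IndepFun_iff_Indep]
  refine indep_of_indep_of_le h hY.comap_le ?_
  exact le_iSup₂ (f := fun j (_ : j ∈ ({i} : Set ι)) => MeasurableSpace.comap (f j) ‹_›) i rfl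

theorem measurable_trajOneDim {Ω : Type*} {m : MeasurableSpace Ω} {w : ℕ → Ω → ℝ} {n : ℕ}
    (hw : ∀ i < n, Measurable[m] (w i)) (x₀ : ℝ) {k : ℕ} (hk : k ≤ n) :
    Measurable[m] (trajOneDim w x₀ k) := by
  induction k with
  | zero => exact measurable_const
  | succ k ih =>
    have hX := ih (Nat.le_of_succ_le hk)
    exact hX.add ((hX.pow_const 2).mul (hw k hk))

theorem ProbabilityTheory.IndepFun.mul_measure_le_measure_inter_preimage {Ω β γ : Type*}
    [MeasurableSpace Ω] {P : Measure Ω} [MeasurableSpace β] [MeasurableSpace γ]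
    [IsFiniteMeasure P] {Y : Ω → β} {W : Ω → γ} (hY : Measurable Y) (hW : Measurable W)
    (hYW : IndepFun Y W P)
    {S : Set β} (hS : MeasurableSet S) {C : Set (β × γ)} (hC : MeasurableSet C) {c : ℝ≥0∞}
    (hc : ∀ y ∈ S, c ≤ P.map W (Prod.mk y ⁻¹' C)) :
    c * P (Y ⁻¹' S) ≤ P (Y ⁻¹' S ∩ (fun ω => (Y ω, W ω)) ⁻¹' C) := by
  have hmap : P.map (fun ω => (Y ω, W ω)) = (P.map Y).prod (P.map W) :=
    (indepFun_iff_map_prod_eq_prod_map_map hY.aemeasurable hW.aemeasurable).1 hYW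
  calc c * P (Y ⁻¹' S) = ∫⁻ _ in S, c ∂P.map Y := by
        rw [setLIntegral_const, Measure.map_apply hY hS]
    _ ≤ ∫⁻ y in S, P.map W (Prod.mk y ⁻¹' C) ∂P.map Y := setLIntegral_mono' hS hc
    _ = ((P.map Y).prod (P.map W)).restrict (S ×ˢ Set.univ) C := by
        rw [← Measure.prod_restrict, Measure.restrict_univ, Measure.prod_apply hC]
    _ = P (Y ⁻¹' S ∩ (fun ω => (Y ω, W ω)) ⁻¹' C) := by
        rw [Measure.restrict_apply hC, Set.inter_comm, ← hmap,
          Measure.map_apply (hY.prodMk hW) (hS.prod .univ |>.inter hC),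
          Set.preimage_inter, Set.mk_preimage_prod, Set.preimage_univ, Set.inter_univ]

def escapeUpTo {Ω : Type*} (w : ℕ → Ω → ℝ) (x₀ : ℝ) (n : ℕ) : Set Ω :=
  {ω | ∀ k ≤ n, 2 ^ k * |x₀| ≤ |trajOneDim w x₀ k ω|}

theorem iInter_escapeUpTo_subset {Ω : Type*} {w : ℕ → Ω → ℝ} {x₀ : ℝ} (hx₀ : 4 < |x₀|) :
    ⋂ n, escapeUpTo w x₀ n ⊆ {ω | ∀ k : ℕ, (2 : ℝ) ^ (k + 2) < |trajOneDim w x₀ k ω|} := by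
  intro ω hω k
  calc (2 : ℝ) ^ (k + 2) = 2 ^ k * 4 := by ring
    _ < 2 ^ k * |x₀| := by gcongr
    _ ≤ |trajOneDim w x₀ k ω| := Set.mem_iInter.1 hω k k le_rfl

theorem abs_trajOneDim_succ {Ω : Type*} (w : ℕ → Ω → ℝ) (x₀ : ℝ) (n : ℕ) (ω : Ω) :
    |trajOneDim w x₀ (n + 1) ω| = |trajOneDim w x₀ n ω| * |1 + trajOneDim w x₀ n ω * w n ω| := by
  rw [← abs_mul, trajOneDim]
  ring_nf

theorem mem_escapeUpTo_succ {Ω : Type*} {w : ℕ → Ω → ℝ} {x₀ : ℝ} {n : ℕ} {ω : Ω}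
    (hω : ω ∈ escapeUpTo w x₀ n) (hdouble : 2 ≤ |1 + trajOneDim w x₀ n ω * w n ω|) :
    ω ∈ escapeUpTo w x₀ (n + 1) := by
  intro k hk
  rcases Nat.le_succ_iff.1 hk with hk | rfl
  · exact hω k hk
  · calc 2 ^ (n + 1) * |x₀| = 2 ^ n * |x₀| * 2 := by ring
      _ ≤ |trajOneDim w x₀ n ω| * |1 + trajOneDim w x₀ n ω * w n ω| :=
          mul_le_mul (hω n le_rfl) hdouble zero_le_two (abs_nonneg _)
      _ = |trajOneDim w x₀ (n + 1) ω| := (abs_trajOneDim_succ w x₀ n ω).symm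

theorem ofReal_exp_le_uniformPM {x : ℝ} {n : ℕ} (hx : 2 ^ (n + 2) ≤ |x|) :
    ENNReal.ofReal (exp (-(2 * (1 / 2) ^ (n + 1)))) ≤ uniformPM {t | 2 ≤ |1 + x * t|} := by
  have hx₀ : x ≠ 0 := abs_pos.1 (lt_of_lt_of_le (by positivity) hx)
  refine le_trans (ENNReal.ofReal_le_ofReal ?_) (ofReal_one_sub_le_uniformPM hx₀)
  calc exp (-(2 * (1 / 2) ^ (n + 1))) ≤ 1 - (1 / 2) ^ (n + 1) :=
        exp_neg_two_mul_le_one_sub (by positivity)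
          (pow_le_of_le_one (by norm_num) (by norm_num) n.succ_ne_zero)
    _ ≤ 1 - 2 / |x| := by
        have : (1 / 2 : ℝ) ^ (n + 1) = 2 / 2 ^ (n + 2) := by
          rw [div_pow, one_pow, pow_succ _ (n + 1)]; field_simp
        rw [this]; gcongr

section

variable {Ω : Type*} [MeasurableSpace Ω] {P : Measure Ω} [IsProbabilityMeasure P]
  {w : ℕ → Ω → ℝ} {x₀ : ℝ}

theorem measure_escapeUpTo_succ_ge (hw : ∀ k, Measurable (w k)) (hind : iIndepFun w P)
    (hlaw : ∀ k, P.map (w k) = uniformPM) (hx₀ : 4 ≤ |x₀|) (n : ℕ) :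
    ENNReal.ofReal (exp (-(2 * (1 / 2) ^ (n + 1)))) * P (escapeUpTo w x₀ n) ≤
      P (escapeUpTo w x₀ (n + 1)) := by
  -- The trajectory up to time `n` is a function of `w 0, …, w (n - 1)`, hence independent of `w n`.
  set Y : Ω → Fin (n + 1) → ℝ := fun ω k => trajOneDim w x₀ k ω
  set S : Set (Fin (n + 1) → ℝ) := {v | ∀ k : Fin (n + 1), 2 ^ (k : ℕ) * |x₀| ≤ |v k|}
  set C : Set ((Fin (n + 1) → ℝ) × ℝ) := {p | 2 ≤ |1 + p.1 (Fin.last n) * p.2|}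
  have hYpast : Measurable[⨆ i ∈ Set.Iio n, MeasurableSpace.comap (w i) inferInstance] Y := by
    -- makes the past σ-algebra the ambient one while `measurable_pi_lambda` is elaborated
    let _ : MeasurableSpace Ω := ⨆ i ∈ Set.Iio n, MeasurableSpace.comap (w i) inferInstance
    refine measurable_pi_lambda _ fun k => measurable_trajOneDim (fun i hi => ?_) x₀ k.is_le
    exact Measurable.of_comap_le (le_iSup₂ (f := fun i (_ : i ∈ Set.Iio n) =>
      MeasurableSpace.comap (w i) inferInstance) i hi)
  have hY : Measurable Y := hYpast.mono (iSup₂_le fun i _ => (hw i).comap_le) le_rfl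
  have hS : MeasurableSet S := by
    simp only [S, Set.ofPred_forall]
    exact .iInter fun k => measurableSet_le measurable_const (measurable_pi_apply k).abs
  have hC : MeasurableSet C := measurableSet_le measurable_const (by fun_prop)
  have hYS : Y ⁻¹' S = escapeUpTo w x₀ n := by
    ext ω
    simp [Y, S, escapeUpTo, Fin.forall_iff]
  have hsub : Y ⁻¹' S ∩ (fun ω => (Y ω, w n ω)) ⁻¹' C ⊆ escapeUpTo w x₀ (n + 1) :=
    fun ω hω => mem_escapeUpTo_succ (hYS ▸ hω.1) hω.2
  refine le_trans ?_ (measure_mono hsub)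
  rw [← hYS]
  refine (hind.indepFun_of_measurable_iSup hw Set.self_notMem_Iio hYpast)
    |>.mul_measure_le_measure_inter_preimage hY (hw n) hS hC fun v hv => ?_
  rw [hlaw]
  refine ofReal_exp_le_uniformPM ?_
  calc (2 : ℝ) ^ (n + 2) = 2 ^ n * 4 := by ring
    _ ≤ 2 ^ n * |x₀| := by gcongr
    _ ≤ |v (Fin.last n)| := hv (Fin.last n)

theorem measurableSet_escapeUpTo (hw : ∀ k, Measurable (w k)) (x₀ : ℝ) (n : ℕ) :
    MeasurableSet (escapeUpTo w x₀ n) := by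
  simp only [escapeUpTo, Set.ofPred_forall]
  exact .iInter fun k => .iInter fun _ => measurableSet_le measurable_const
    (measurable_trajOneDim (fun i (_ : i < k) => hw i) x₀ le_rfl).abs

theorem ofReal_exp_neg_two_le_measure_iInter_escapeUpTo (hw : ∀ k, Measurable (w k))
    (hind : iIndepFun w P) (hlaw : ∀ k, P.map (w k) = uniformPM) (hx₀ : 4 ≤ |x₀|) :
    ENNReal.ofReal (exp (-2)) ≤ P (⋂ n, escapeUpTo w x₀ n) := by
  -- `2 * (1 - (1 / 2) ^ n) = ∑ k < n, 2 * (1 / 2) ^ (k + 1)`, the exponents of the step factors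
  have hbound : ∀ n, ENNReal.ofReal (exp (-(2 * (1 - (1 / 2) ^ n)))) ≤
      P (escapeUpTo w x₀ n) := by
    intro n
    induction n with
    | zero =>
      have huniv : escapeUpTo w x₀ 0 = Set.univ := by
        ext ω
        simp [escapeUpTo, trajOneDim]
      simp [huniv]
    | succ n ih =>
      calc ENNReal.ofReal (exp (-(2 * (1 - (1 / 2) ^ (n + 1)))))
          = ENNReal.ofReal (exp (-(2 * (1 / 2) ^ (n + 1)))) *
              ENNReal.ofReal (exp (-(2 * (1 - (1 / 2) ^ n)))) := by
            rw [← ENNReal.ofReal_mul (exp_pos _).le, ← exp_add]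
            ring_nf
        _ ≤ _ * P (escapeUpTo w x₀ n) := by gcongr
        _ ≤ _ := measure_escapeUpTo_succ_ge hw hind hlaw hx₀ n
  have hanti : Antitone (escapeUpTo w x₀) := fun m n hmn ω hω k hk => hω k (hk.trans hmn)
  rw [hanti.measure_iInter (fun n => (measurableSet_escapeUpTo hw x₀ n).nullMeasurableSet)
    ⟨0, measure_ne_top P _⟩]
  refine le_iInf fun n => le_trans (ENNReal.ofReal_le_ofReal ?_) (hbound n)
  have : (0 : ℝ) ≤ (1 / 2) ^ n := by positivity
  exact exp_le_exp.2 (by linarith)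

theorem exists_measure_hitting_ne_one (hw : ∀ k, Measurable (w k)) (hind : iIndepFun w P)
    (hlaw : ∀ k, P.map (w k) = uniformPM) {G : Set ℝ} (hG : Bornology.IsBounded G) :
    ∃ y₀ : ℝ, P {ω | ∃ k : ℕ, trajOneDim w y₀ k ω ∈ G} ≠ 1 := by
  obtain ⟨r, hr⟩ := hG.subset_closedBall 0
  set y₀ := max 4 (r + 1)
  have h4 : 4 ≤ y₀ := le_max_left _ _
  have hy₀ : |y₀| = y₀ := abs_of_nonneg (by linarith)
  set E := ⋂ n, escapeUpTo w y₀ n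
  have hE : MeasurableSet E := .iInter (measurableSet_escapeUpTo hw y₀)
  have hPE : 0 < P E := lt_of_lt_of_le (ENNReal.ofReal_pos.2 (exp_pos _))
    (ofReal_exp_neg_two_le_measure_iInter_escapeUpTo hw hind hlaw (by rwa [hy₀]))
  have hsub : {ω | ∃ k : ℕ, trajOneDim w y₀ k ω ∈ G} ⊆ Eᶜ := by
    rintro ω ⟨k, hk⟩ hωE
    have hXk : |trajOneDim w y₀ k ω| ≤ r := by simpa using hr hk
    have hesc : 2 ^ k * |y₀| ≤ |trajOneDim w y₀ k ω| := Set.mem_iInter.1 hωE k k le_rfl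
    have : y₀ ≤ 2 ^ k * |y₀| := by
      rw [hy₀]; exact le_mul_of_one_le_left (by linarith) (one_le_pow₀ one_le_two)
    linarith [le_max_right 4 (r + 1)]
  refine ⟨y₀, fun h => ?_⟩
  have := measure_mono (μ := P) hsub
  rw [h, prob_compl_eq_one_sub hE] at this
  exact (ENNReal.sub_lt_self ENNReal.one_ne_top one_ne_zero hPE.ne').not_ge this

end

/-- **The example system escapes with positive probability.** For the system
`x_{k+1} = x_k + x_k² w_k` with i.i.d. disturbances uniform on `[-1,1]` and `|x₀| > 4`,
the event `{∀ k, |X_k| > 2^{k+2}}` has probability at least `e^{−2}`; in particular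
`|X_k| → ∞` with probability at least `e^{−2} > 0`, so the system is not almost-surely
reachable to any bounded target set. -/
theorem example_system_diverges_with_positive_probability
    (Ω : Type*) [MeasurableSpace Ω] (P : Measure Ω) [IsProbabilityMeasure P]
    (w : ℕ → Ω → ℝ)
    (hwmeas : ∀ k, Measurable (w k))
    (hindep : iIndepFun w P)
    (hlaw : ∀ k, Measure.map (w k) P = uniformPM)
    (x₀ : ℝ) (hx₀ : 4 < |x₀|) :
    Real.exp (-2) ≤ (P {ω | ∀ k : ℕ, (2 : ℝ) ^ (k + 2) < |trajOneDim w x₀ k ω|}).toReal ∧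
    Real.exp (-2) ≤ (P {ω | Tendsto (fun k => |trajOneDim w x₀ k ω|) atTop atTop}).toReal ∧
    0 < Real.exp (-2) ∧
    ∀ G : Set ℝ, Bornology.IsBounded G →
      ¬ (∀ y₀ : ℝ, P {ω | ∃ k : ℕ, trajOneDim w y₀ k ω ∈ G} = 1) := by
  have hfast : ENNReal.ofReal (exp (-2)) ≤
      P {ω | ∀ k : ℕ, (2 : ℝ) ^ (k + 2) < |trajOneDim w x₀ k ω|} :=
    (ofReal_exp_neg_two_le_measure_iInter_escapeUpTo hwmeas hindep hlaw hx₀.le).trans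
      (measure_mono (iInter_escapeUpTo_subset hx₀))
  have hdiv : {ω | ∀ k : ℕ, (2 : ℝ) ^ (k + 2) < |trajOneDim w x₀ k ω|} ⊆
      {ω | Tendsto (fun k => |trajOneDim w x₀ k ω|) atTop atTop} := fun ω hω =>
    tendsto_atTop_mono (fun k => (hω k).le)
      ((tendsto_pow_atTop_atTop_of_one_lt one_lt_two).comp (tendsto_add_atTop_nat 2))
  refine ⟨(ENNReal.ofReal_le_iff_le_toReal (measure_ne_top P _)).1 hfast,
    (ENNReal.ofReal_le_iff_le_toReal (measure_ne_top P _)).1 (hfast.trans (measure_mono hdiv)),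
    exp_pos _, fun G hG hall => ?_⟩
  obtain ⟨y₀, hy₀⟩ := exists_measure_hitting_ne_one hwmeas hindep hlaw hG
  exact hy₀ (hall y₀)
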